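/- arXiv:2303.04359 — 2 statements merged into one kernel-verified Lean document; each statement's English description precedes it below -/
import Mathlib

section
/- Let K ⊆ ℝ² be a convex body of constant width 1, with support function h(θ) = max_{x∈K} x·u(θ) satisfying h(θ) + h(θ+π) = 1 for all θ. Then h is continuously differentiable with Lipschitz continuous derivative (h ∈ C^{1,1}(S¹)), and 0 ≤ h''(θ) + h(θ) ≤ 1 at almost every θ ∈ ℝ (h is twice differentiable almost everywhere). -/
open Real MeasureTheory

/-- The direction vector `u θ = (cos θ, sin θ)` in the Euclidean plane. -/
noncomputable def u (θ : ℝ) : EuclideanSpace ℝ (Fin 2) := WithLp.toLp 2 ![Real.cos θ, Real.sin θ]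

/-- `h` is the support function of `K`: for every direction `θ`,
`h θ` is the maximum of `x · u θ` over `x ∈ K`. -/
def IsSupportFn (K : Set (EuclideanSpace ℝ (Fin 2))) (h : ℝ → ℝ) : Prop :=
  ∀ θ : ℝ, IsGreatest ((fun x => (inner ℝ x (u θ) : ℝ)) '' K) (h θ)

/-!
Write `Δ²f(x, t) = f (x + t) + f (x - t) - 2 f x`. Testing the point of `K` that realises `h θ`
against the directions `θ ± t` gives `h θ · Δ²cos(0, t) ≤ Δ²h(θ, t)`; applied at `θ + π` and
combined with `h (θ + π) = 1 - h θ` it gives `Δ²h(θ, t) ≤ (h θ - 1) · Δ²cos(0, t)`.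
As `h` is bounded and `|Δ²cos(0, t)| ≤ t²`, this yields `|Δ²h| ≤ C t²`, so `±h + C x² / 2` are
midpoint convex and continuous, hence convex; two such convex functions force `h` to be
differentiable with `C`-Lipschitz derivative. Where `h'` is differentiable (almost everywhere, by
Rademacher), `Δ²h(θ, t) / t² → h''(θ)` and `Δ²cos(0, t) / t² → -1`, and the two inequalities
pass to the limit.
-/

open Set Filter Topology NNReal Asymptotics

def symmSecondDiff (f : ℝ → ℝ) (x t : ℝ) : ℝ := f (x + t) + f (x - t) - 2 * f x

lemma symmSecondDiff_add_mul_sq (f : ℝ → ℝ) (c x t : ℝ) :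
    symmSecondDiff (fun y => f y + c / 2 * y ^ 2) x t = symmSecondDiff f x t + c * t ^ 2 := by
  simp only [symmSecondDiff]
  ring

lemma symmSecondDiff_cos_zero (t : ℝ) : symmSecondDiff cos 0 t = 2 * cos t - 2 := by
  simp only [symmSecondDiff, zero_add, zero_sub, cos_neg, cos_zero]
  ring

lemma nonpos_of_mem_Icc_of_symmSecondDiff_nonneg {φ : ℝ → ℝ} (hφ : Continuous φ)
    (hmid : ∀ x t, 0 ≤ symmSecondDiff φ x t) {a b : ℝ} (ha : φ a ≤ 0) (hb : φ b ≤ 0)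
    {s : ℝ} (hs : s ∈ Icc a b) : φ s ≤ 0 := by
  by_contra! hpos
  obtain ⟨c₀, hc₀, hmax⟩ := isCompact_Icc.exists_isMaxOn ⟨s, hs⟩ hφ.continuousOn
  -- the rightmost maximiser violates the midpoint inequality
  have hS : IsCompact (Icc a b ∩ φ ⁻¹' {φ c₀}) :=
    isCompact_Icc.inter_right (isClosed_singleton.preimage hφ)
  obtain ⟨⟨hac, hcb⟩, hc⟩ := hS.sSup_mem ⟨c₀, hc₀, rfl⟩
  set c := sSup (Icc a b ∩ φ ⁻¹' {φ c₀})
  have hc : φ c = φ c₀ := hc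
  have hcpos : 0 < φ c := hc ▸ hpos.trans_le (hmax hs)
  have hac : a < c := hac.lt_of_ne fun h => by rw [h] at ha; linarith
  have hcb : c < b := hcb.lt_of_ne fun h => by rw [← h] at hb; linarith
  set δ := min (c - a) (b - c)
  have hδ : 0 < δ := lt_min (sub_pos.2 hac) (sub_pos.2 hcb)
  have hright_mem : c + δ ∈ Icc a b := ⟨by linarith, by linarith [min_le_right (c - a) (b - c)]⟩
  have hleft_mem : c - δ ∈ Icc a b := ⟨by linarith [min_le_left (c - a) (b - c)], by linarith⟩
  have hright : φ (c + δ) < φ c := by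
    refine ((hmax hright_mem).trans_eq hc.symm).lt_of_ne fun heq => ?_
    have : c + δ ≤ c := le_csSup hS.bddAbove ⟨hright_mem, heq.trans hc⟩
    linarith
  have hleft : φ (c - δ) ≤ φ c := (hmax hleft_mem).trans_eq hc.symm
  have := hmid c δ
  rw [symmSecondDiff] at this
  linarith

lemma convexOn_univ_of_symmSecondDiff_nonneg {f : ℝ → ℝ} (hf : Continuous f)
    (hmid : ∀ x t, 0 ≤ symmSecondDiff f x t) : ConvexOn ℝ univ f := by
  refine LinearOrder.convexOn_of_lt convex_univ fun x _ y _ hxy a b ha hb hab => ?_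
  have hyx : y - x ≠ 0 := sub_ne_zero.2 hxy.ne'
  -- `f` minus its chord over `[x, y]` still satisfies `hmid` and vanishes at `x` and `y`
  let φ s := f s - (f x + (s - x) / (y - x) * (f y - f x))
  have hφ : Continuous φ := by fun_prop
  have hφmid : ∀ s t, 0 ≤ symmSecondDiff φ s t := fun s t => by
    convert hmid s t using 1
    simp only [symmSecondDiff, φ]
    ring
  have hmem : a • x + b • y ∈ Icc x y := by
    rw [← segment_eq_Icc hxy.le]
    exact ⟨a, b, ha.le, hb.le, hab, rfl⟩
  have := nonpos_of_mem_Icc_of_symmSecondDiff_nonneg hφ hφmid (by simp [φ]) (by simp [φ, hyx]) hmem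
  have hchord : (a * x + b * y - x) / (y - x) = b := by
    rw [div_eq_iff hyx]
    linear_combination x * hab
  simp only [φ, smul_eq_mul, hchord] at this ⊢
  linear_combination this - f x * hab

lemma lipschitzOnWith_of_monotoneOn {g : ℝ → ℝ} {s : Set ℝ} {K : ℝ≥0}
    (h₁ : MonotoneOn (fun x => g x + K * x) s) (h₂ : MonotoneOn (fun x => K * x - g x) s) :
    LipschitzOnWith K g s := by
  refine LipschitzOnWith.of_dist_le_mul fun x hx y hy => ?_
  wlog hxy : x ≤ y generalizing x y
  · rw [dist_comm, dist_comm x]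
    exact this y hy x hx (le_of_not_ge hxy)
  have hle₁ : g x + K * x ≤ g y + K * y := h₁ hx hy hxy
  have hle₂ : K * x - g x ≤ K * y - g y := h₂ hx hy hxy
  rw [Real.dist_eq, Real.dist_eq, abs_sub_comm x, abs_of_nonneg (sub_nonneg.2 hxy), abs_le]
  constructor <;> linarith

lemma differentiableAt_of_lipschitzOnWith_slope {f : ℝ → ℝ} {x : ℝ} {K : ℝ≥0}
    (hf : LipschitzOnWith K (slope f x) {x}ᶜ) : DifferentiableAt ℝ f x := by
  obtain ⟨g, hg, hfg⟩ := hf.extend_real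
  refine (hasDerivAt_iff_tendsto_slope.2 ?_).differentiableAt (f' := g x)
  exact (hg.continuous.continuousAt.tendsto.mono_left nhdsWithin_le_nhds).congr'
    (eventuallyEq_nhdsWithin_of_eqOn hfg).symm

lemma slope_add_mul_sq {f : ℝ → ℝ} (c : ℝ) {x y : ℝ} (hxy : y ≠ x) :
    slope (fun z => f z + c * z ^ 2) x y = slope f x y + c * y + c * x := by
  have : y - x ≠ 0 := sub_ne_zero.2 hxy
  simp only [slope_def_field]
  field_simp
  ring

lemma monotoneOn_slope_add_mul_of_convexOn {f : ℝ → ℝ} {c : ℝ}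
    (hF : ConvexOn ℝ univ fun x => f x + c * x ^ 2) (x : ℝ) :
    MonotoneOn (fun y => slope f x y + c * y) {x}ᶜ := by
  intro y hy z hz hyz
  have := hF.slope_mono (mem_univ x) ⟨trivial, hy⟩ ⟨trivial, hz⟩ hyz
  rw [slope_add_mul_sq c hy, slope_add_mul_sq c hz] at this
  show slope f x y + c * y ≤ slope f x z + c * z
  linarith

lemma monotone_deriv_add_mul_of_convexOn {f : ℝ → ℝ} {c : ℝ} (hf : Differentiable ℝ f)
    (hF : ConvexOn ℝ univ fun x => f x + c / 2 * x ^ 2) :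
    Monotone fun x => deriv f x + c * x := by
  have hderiv : (deriv fun x => f x + c / 2 * x ^ 2) = fun x => deriv f x + c * x :=
    funext fun x =>
      ((hf x).hasDerivAt.fun_add ((hasDerivAt_pow 2 x).const_mul (c / 2))).deriv.trans (by ring)
  rw [← hderiv, ← monotoneOn_univ]
  exact hF.monotoneOn_deriv fun x _ => (hf x).add (by fun_prop)

lemma differentiable_and_lipschitzWith_deriv_of_convexOn {f : ℝ → ℝ} {C : ℝ≥0}
    (hF : ConvexOn ℝ univ fun x => f x + C / 2 * x ^ 2)
    (hG : ConvexOn ℝ univ fun x => -f x + C / 2 * x ^ 2) :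
    Differentiable ℝ f ∧ LipschitzWith C (deriv f) := by
  have hdiff : Differentiable ℝ f := fun x => by
    refine differentiableAt_of_lipschitzOnWith_slope (K := C / 2)
      (lipschitzOnWith_of_monotoneOn ?_ ?_)
    · simpa using monotoneOn_slope_add_mul_of_convexOn hF x
    · simpa [neg_add_eq_sub] using monotoneOn_slope_add_mul_of_convexOn hG x
  refine ⟨hdiff, lipschitzOnWith_univ.1 (lipschitzOnWith_of_monotoneOn ?_ ?_)⟩
  · simpa [monotoneOn_univ] using monotone_deriv_add_mul_of_convexOn hdiff hF
  · simpa [monotoneOn_univ, neg_add_eq_sub] using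
      monotone_deriv_add_mul_of_convexOn hdiff.neg hG

lemma differentiable_and_lipschitzWith_deriv_of_abs_symmSecondDiff_le {f : ℝ → ℝ} {C : ℝ≥0}
    (hf : Continuous f) (hC : ∀ x t, |symmSecondDiff f x t| ≤ C * t ^ 2) :
    Differentiable ℝ f ∧ LipschitzWith C (deriv f) := by
  refine differentiable_and_lipschitzWith_deriv_of_convexOn
    (convexOn_univ_of_symmSecondDiff_nonneg (by fun_prop) fun x t => ?_)
    (convexOn_univ_of_symmSecondDiff_nonneg (by fun_prop) fun x t => ?_)
  · rw [symmSecondDiff_add_mul_sq]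
    linarith [neg_abs_le (symmSecondDiff f x t), hC x t]
  · have hneg : symmSecondDiff (fun y => -f y) x t = -symmSecondDiff f x t := by
      simp only [symmSecondDiff]
      ring
    rw [symmSecondDiff_add_mul_sq, hneg]
    linarith [le_abs_self (symmSecondDiff f x t), hC x t]

lemma isLittleO_symmSecondDiff_sub_mul_sq {f : ℝ → ℝ} {x a : ℝ}
    (hf : ∀ᶠ y in 𝓝 x, DifferentiableAt ℝ f y) (ha : HasDerivAt (deriv f) a x) :
    (fun t => symmSecondDiff f x t - a * t ^ 2) =o[𝓝 0] fun t => t ^ 2 := by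
  refine IsLittleO.of_bound fun ε hε => ?_
  have hlin := (hasDerivAt_iff_isLittleO_nhds_zero.1 ha).def (half_pos hε)
  have hdiff : ∀ᶠ s in 𝓝 (0 : ℝ), DifferentiableAt ℝ f (x + s) :=
    (continuous_const_add x).tendsto' 0 x (add_zero x) |>.eventually hf
  have hgood := hdiff.and hlin
  obtain ⟨δ, hδ, hball⟩ := Metric.eventually_nhds_iff_ball.1
    (hgood.and ((continuous_neg.tendsto' (0 : ℝ) 0 neg_zero).eventually hgood))
  simp only [← sub_eq_add_neg, neg_smul, sub_neg_eq_add, norm_neg] at hball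
  filter_upwards [Metric.ball_mem_nhds 0 hδ] with t ht
  have hsmall : ∀ s ∈ Metric.closedBall (0 : ℝ) ‖t‖, s ∈ Metric.ball (0 : ℝ) δ := fun s hs =>
    Metric.closedBall_subset_ball (by simpa using ht) hs
  let g s := symmSecondDiff f x s - a * s ^ 2
  have hderiv : ∀ s ∈ Metric.closedBall (0 : ℝ) ‖t‖, HasDerivWithinAt g
      (deriv f (x + s) - deriv f (x - s) - 2 * a * s) (Metric.closedBall 0 ‖t‖) s := fun s hs => by
    obtain ⟨⟨hd_add, -⟩, hd_sub, -⟩ := hball s (hsmall s hs)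
    have := ((hd_add.hasDerivAt.comp_const_add x s).add
      (hd_sub.hasDerivAt.comp_const_sub x s)).sub_const (2 * f x) |>.sub
      ((hasDerivAt_pow 2 s).const_mul a)
    exact (this.congr_deriv (by ring)).hasDerivWithinAt
  have hbound : ∀ s ∈ Metric.closedBall (0 : ℝ) ‖t‖,
      ‖deriv f (x + s) - deriv f (x - s) - 2 * a * s‖ ≤ ε * ‖t‖ := fun s hs => by
    obtain ⟨⟨-, h_add⟩, -, h_sub⟩ := hball s (hsmall s hs)
    have hst : ‖s‖ ≤ ‖t‖ := by simpa using hs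
    calc ‖deriv f (x + s) - deriv f (x - s) - 2 * a * s‖
        = ‖(deriv f (x + s) - deriv f x - s • a) - (deriv f (x - s) - deriv f x + s • a)‖ := by
          rw [smul_eq_mul]
          ring_nf
      _ ≤ ε / 2 * ‖s‖ + ε / 2 * ‖s‖ := (norm_sub_le _ _).trans (add_le_add h_add h_sub)
      _ ≤ ε * ‖t‖ := by linarith [mul_le_mul_of_nonneg_left hst hε.le]
  have := (convex_closedBall 0 ‖t‖).norm_image_sub_le_of_norm_hasDerivWithin_le hderiv hbound
    (x := 0) (y := t) (Metric.mem_closedBall_self (norm_nonneg t)) (by simp)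
  simpa [g, symmSecondDiff, mul_assoc, ← sq, ← two_mul] using this

lemma tendsto_symmSecondDiff_div_sq {f : ℝ → ℝ} {x a : ℝ}
    (hf : ∀ᶠ y in 𝓝 x, DifferentiableAt ℝ f y) (ha : HasDerivAt (deriv f) a x) :
    Tendsto (fun t => symmSecondDiff f x t / t ^ 2) (𝓝[≠] 0) (𝓝 a) := by
  have hlim := ((isLittleO_symmSecondDiff_sub_mul_sq hf ha).tendsto_div_nhds_zero.mono_left
    (nhdsWithin_le_nhds (s := {0}ᶜ))).const_add a
  rw [add_zero] at hlim
  refine hlim.congr' (eventually_nhdsWithin_of_forall fun t (ht : t ≠ 0) => ?_)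
  field_simp
  ring

lemma tendsto_symmSecondDiff_cos_div_sq :
    Tendsto (fun t => symmSecondDiff cos 0 t / t ^ 2) (𝓝[≠] 0) (𝓝 (-1)) := by
  refine tendsto_symmSecondDiff_div_sq (Eventually.of_forall differentiable_cos) ?_
  rw [deriv_cos']
  exact (Real.hasDerivAt_sin 0).neg.congr_deriv (by simp)

lemma u_add_add_u_sub (θ t : ℝ) : u (θ + t) + u (θ - t) = (2 * cos t) • u θ := by
  ext i
  fin_cases i <;> simp [u, cos_add, cos_sub, sin_add, sin_sub] <;> ring

@[fun_prop]
lemma continuous_u : Continuous u := by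
  unfold u
  fun_prop

namespace IsSupportFn

variable {K : Set (EuclideanSpace ℝ (Fin 2))} {h : ℝ → ℝ}

lemma periodic (hK : IsSupportFn K h) : Function.Periodic h (2 * π) := by
  intro θ
  have hu : u (θ + 2 * π) = u θ := by
    ext i
    fin_cases i <;> simp [u]
  exact (hu ▸ hK (θ + 2 * π)).unique (hK θ)

lemma continuous (hK : IsSupportFn K h) (hcomp : IsCompact K) : Continuous h := by
  have hsSup : h = fun θ => sSup ((fun x => (inner ℝ x (u θ) : ℝ)) '' K) :=
    funext fun θ => (hK θ).csSup_eq.symm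
  rw [hsSup]
  exact hcomp.continuous_sSup (f := fun θ x => (inner ℝ x (u θ) : ℝ)) (by fun_prop)

lemma mul_symmSecondDiff_cos_le (hK : IsSupportFn K h) (θ t : ℝ) :
    h θ * symmSecondDiff cos 0 t ≤ symmSecondDiff h θ t := by
  obtain ⟨x, hx, hxθ⟩ := (hK θ).1
  have h_add : (inner ℝ x (u (θ + t)) : ℝ) ≤ h (θ + t) := (hK (θ + t)).2 ⟨x, hx, rfl⟩
  have h_sub : (inner ℝ x (u (θ - t)) : ℝ) ≤ h (θ - t) := (hK (θ - t)).2 ⟨x, hx, rfl⟩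
  have hsum : (inner ℝ x (u (θ + t)) : ℝ) + inner ℝ x (u (θ - t)) = 2 * cos t * h θ := by
    rw [← inner_add_right, u_add_add_u_sub, real_inner_smul_right, ← hxθ]
  rw [symmSecondDiff_cos_zero, symmSecondDiff]
  linarith

lemma symmSecondDiff_le_of_width (hK : IsSupportFn K h) (hwidth : ∀ θ, h θ + h (θ + π) = 1)
    (θ t : ℝ) : symmSecondDiff h θ t ≤ (h θ - 1) * symmSecondDiff cos 0 t := by
  have hflip : ∀ s, h (s + π) = 1 - h s := fun s => eq_sub_of_add_eq' (hwidth s)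
  have := hK.mul_symmSecondDiff_cos_le (θ + π) t
  simp only [symmSecondDiff] at this ⊢
  rw [add_right_comm, show θ + π - t = θ - t + π by ring, hflip, hflip, hflip] at this
  linarith

lemma abs_symmSecondDiff_le (hK : IsSupportFn K h) (hwidth : ∀ θ, h θ + h (θ + π) = 1)
    {M : ℝ} (hM : ∀ θ, |h θ| ≤ M) (θ t : ℝ) :
    |symmSecondDiff h θ t| ≤ (M + 1) * t ^ 2 := by
  have hc₁ : 0 ≤ -symmSecondDiff cos 0 t := by
    rw [symmSecondDiff_cos_zero]
    linarith [cos_le_one t]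
  have hc₂ : -symmSecondDiff cos 0 t ≤ t ^ 2 := by
    rw [symmSecondDiff_cos_zero]
    linarith [one_sub_sq_div_two_le_cos (x := t)]
  have hlo := hK.mul_symmSecondDiff_cos_le θ t
  have hhi := hK.symmSecondDiff_le_of_width hwidth θ t
  obtain ⟨hθ₁, hθ₂⟩ := abs_le.1 (hM θ)
  rw [abs_le]
  constructor <;> nlinarith

end IsSupportFn

theorem constant_width_support_function_C11_general
    (K : Set (EuclideanSpace ℝ (Fin 2))) (h : ℝ → ℝ)
    (hcomp : IsCompact K)
    (hsupp : IsSupportFn K h)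
    (hwidth : ∀ θ : ℝ, h θ + h (θ + π) = 1) :
    Function.Periodic h (2 * π) ∧ ContDiff ℝ 1 h ∧ (∃ L : NNReal, LipschitzWith L (deriv h)) ∧
    (∀ᵐ θ : ℝ, DifferentiableAt ℝ (deriv h) θ ∧
      0 ≤ deriv (deriv h) θ + h θ ∧ deriv (deriv h) θ + h θ ≤ 1) := by
  have hcont := hsupp.continuous hcomp
  obtain ⟨M, hM⟩ := isBounded_iff_forall_norm_le.1
    (hsupp.periodic.isBounded_of_continuous two_pi_pos.ne' hcont)
  have hM' : ∀ θ, |h θ| ≤ M := fun θ => hM _ ⟨θ, rfl⟩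
  lift M to ℝ≥0 using (abs_nonneg _).trans (hM' 0)
  obtain ⟨hdiff, hlip⟩ := differentiable_and_lipschitzWith_deriv_of_abs_symmSecondDiff_le
    (C := M + 1) hcont fun θ t => by exact_mod_cast hsupp.abs_symmSecondDiff_le hwidth hM' θ t
  refine ⟨hsupp.periodic, contDiff_one_iff_deriv.2 ⟨hdiff, hlip.continuous⟩, ⟨_, hlip⟩, ?_⟩
  filter_upwards [hlip.ae_differentiableAt] with θ hθ
  have hh := tendsto_symmSecondDiff_div_sq (Eventually.of_forall hdiff) hθ.hasDerivAt
  have hlo := le_of_tendsto_of_tendsto' (tendsto_symmSecondDiff_cos_div_sq.const_mul (h θ)) hh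
    fun t => by
      rw [← mul_div_assoc]
      gcongr
      exact hsupp.mul_symmSecondDiff_cos_le θ t
  have hhi := le_of_tendsto_of_tendsto' hh (tendsto_symmSecondDiff_cos_div_sq.const_mul (h θ - 1))
    fun t => by
      rw [← mul_div_assoc]
      gcongr
      exact hsupp.symmSecondDiff_le_of_width hwidth θ t
  exact ⟨hθ, by linarith, by linarith⟩

/-- The support function of a convex body of constant width 1 is `C^{1,1}(S¹)`:
`2π`-periodic, continuously differentiable with Lipschitz derivative; moreover `h` is
twice differentiable a.e. with `0 ≤ h'' + h ≤ 1` a.e. -/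
theorem constant_width_support_function_C11
    (K : Set (EuclideanSpace ℝ (Fin 2))) (h : ℝ → ℝ)
    (hne : K.Nonempty) (hcomp : IsCompact K) (hconv : Convex ℝ K)
    (hsupp : IsSupportFn K h)
    (hwidth : ∀ θ : ℝ, h θ + h (θ + π) = 1) :
    Function.Periodic h (2 * π) ∧ ContDiff ℝ 1 h ∧ (∃ L : NNReal, LipschitzWith L (deriv h)) ∧
    (∀ᵐ θ : ℝ, DifferentiableAt ℝ (deriv h) θ ∧
      0 ≤ deriv (deriv h) θ + h θ ∧ deriv (deriv h) θ + h θ ≤ 1) :=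
  constant_width_support_function_C11_general K h hcomp hsupp hwidth
end

section
/- Let h : ℝ → ℝ be 2π-periodic, continuously differentiable with Lipschitz continuous derivative, satisfy h(θ+π) + h(θ) = 1 for all θ ∈ ℝ, and satisfy h''(θ) + h(θ) ≥ 0 for almost every θ ∈ ℝ. Then K = ⋂_{θ∈ℝ} {x ∈ ℝ² : x·u(θ) ≤ h(θ)} is a nonempty compact convex set of constant width 1 whose support function equals h. -/
open Real MeasureTheory

/-!
For each direction `θ₀` put `p θ₀ = h θ₀ • u θ₀ + h' θ₀ • u (θ₀ + π / 2)`, so that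
`⟪p θ₀, u θ⟫ = h θ₀ cos (θ - θ₀) + h' θ₀ sin (θ - θ₀)`. Variation of constants for `y'' + y`
(valid since `h'` is absolutely continuous) writes `h θ - ⟪p θ₀, u θ⟫` as
`∫ t in θ₀..θ, sin (θ - t) * (h'' t + h t)`, which is nonnegative when `|θ - θ₀| ≤ π`, hence for
all `θ` by periodicity. Thus `p θ₀ ∈ K` attains `h θ₀` in direction `θ₀`. The intersection of
half-planes is convex and closed, and it is bounded by its four half-planes in the coordinate
directions.
-/

open intervalIntegral

local notation "E²" => EuclideanSpace ℝ (Fin 2)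

lemma inner_u (x : E²) (θ : ℝ) : inner ℝ x (u θ) = x 0 * cos θ + x 1 * sin θ := by
  simp [u, PiLp.inner_apply, Fin.sum_univ_two]
  ring

lemma inner_u_u (α θ : ℝ) : inner ℝ (u α) (u θ) = cos (θ - α) := by
  rw [inner_u, cos_sub]
  simp [u]
  ring

lemma u_periodic : Function.Periodic u (2 * π) := fun θ => by simp [u]

def wulffShape (h : ℝ → ℝ) : Set E² := ⋂ θ : ℝ, {x : E² | inner ℝ x (u θ) ≤ h θ}

lemma mem_wulffShape {h : ℝ → ℝ} {x : E²} : x ∈ wulffShape h ↔ ∀ θ, inner ℝ x (u θ) ≤ h θ :=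
  Set.mem_iInter

lemma convex_wulffShape (h : ℝ → ℝ) : Convex ℝ (wulffShape h) :=
  convex_iInter fun θ => convex_halfSpace_le (innerₛₗ ℝ |>.flip (u θ)).isLinear (h θ)

lemma isClosed_wulffShape (h : ℝ → ℝ) : IsClosed (wulffShape h) :=
  isClosed_iInter fun θ => isClosed_le (by fun_prop) continuous_const

lemma isCompact_wulffShape (h : ℝ → ℝ) : IsCompact (wulffShape h) := by
  refine (isCompact_closedBall 0 (|h 0| + |h π| + |h (π / 2)| + |h (-(π / 2))|))
    |>.of_isClosed_subset (isClosed_wulffShape h) fun x hx => ?_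
  have hx := mem_wulffShape.1 hx
  have h₁ := hx 0
  have h₂ := hx π
  have h₃ := hx (π / 2)
  have h₄ := hx (-(π / 2))
  simp only [inner_u, cos_zero, sin_zero, cos_pi, sin_pi, cos_pi_div_two, sin_pi_div_two,
    cos_neg, sin_neg] at h₁ h₂ h₃ h₄
  have hx₀ : |x 0| ≤ |h 0| + |h π| := abs_le.2
    ⟨by linarith [le_abs_self (h π), abs_nonneg (h 0)],
      by linarith [le_abs_self (h 0), abs_nonneg (h π)]⟩
  have hx₁ : |x 1| ≤ |h (π / 2)| + |h (-(π / 2))| := abs_le.2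
    ⟨by linarith [le_abs_self (h (-(π / 2))), abs_nonneg (h (π / 2))],
      by linarith [le_abs_self (h (π / 2)), abs_nonneg (h (-(π / 2)))]⟩
  have hnorm : ‖x‖ ≤ |x 0| + |x 1| := by
    rw [← sq_le_sq₀ (norm_nonneg x) (by positivity), EuclideanSpace.real_norm_sq_eq,
      Fin.sum_univ_two]
    nlinarith [sq_abs (x 0), sq_abs (x 1), abs_nonneg (x 0), abs_nonneg (x 1)]
  rw [mem_closedBall_zero_iff]
  linarith

lemma isSupportFn_wulffShape {h : ℝ → ℝ}
    (hattained : ∀ θ, ∃ x ∈ wulffShape h, inner ℝ x (u θ) = h θ) :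
    IsSupportFn (wulffShape h) h := fun θ =>
  ⟨(hattained θ).imp fun _ hx => hx, by
    rintro _ ⟨x, hx, rfl⟩
    exact mem_wulffShape.1 hx θ⟩

theorem integral_sin_sub_mul_deriv_deriv_add {h : ℝ → ℝ} (hC1 : ContDiff ℝ 1 h) {a b : ℝ}
    (hac : AbsolutelyContinuousOnInterval (deriv h) a b) :
    ∫ t in a..b, sin (b - t) * (deriv (deriv h) t + h t)
      = h b - (h a * cos (b - a) + deriv h a * sin (b - a)) := by
  have hcos : ContDiff ℝ 1 fun t => cos (b - t) := by fun_prop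
  have hsin : ContDiff ℝ 1 fun t => sin (b - t) := by fun_prop
  have hΦ : AbsolutelyContinuousOnInterval
      (fun t => h t * cos (b - t) + deriv h t * sin (b - t)) a b :=
    (hC1.contDiffOn.absolutelyContinuousOnInterval.fun_mul
      hcos.contDiffOn.absolutelyContinuousOnInterval).fun_add
      (hac.fun_mul hsin.contDiffOn.absolutelyContinuousOnInterval)
  have hderiv : ∀ᵐ t, t ∈ Set.uIoc a b → sin (b - t) * (deriv (deriv h) t + h t) =
      deriv (fun t => h t * cos (b - t) + deriv h t * sin (b - t)) t := by
    filter_upwards [hac.ae_differentiableAt] with t hdiff ht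
    have hb := (hasDerivAt_id' t).const_sub b
    have := ((hC1.differentiable one_ne_zero t).hasDerivAt.mul hb.cos).add
      ((hdiff (Set.uIoc_subset_uIcc ht)).hasDerivAt.mul hb.sin)
    rw [HasDerivAt.deriv (f := fun t => h t * cos (b - t) + deriv h t * sin (b - t)) this]
    ring
  rw [integral_congr_ae hderiv, hΦ.integral_deriv_eq_sub]
  simp

lemma integral_sin_sub_mul_nonneg {g : ℝ → ℝ} (hg : ∀ᵐ t, 0 ≤ g t) {a b : ℝ}
    (hab : |b - a| ≤ π) : 0 ≤ ∫ t in a..b, sin (b - t) * g t := by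
  rcases le_total a b with hle | hle
  · refine integral_nonneg_of_ae_restrict hle ?_
    filter_upwards [ae_restrict_of_ae hg, ae_restrict_mem measurableSet_Icc] with t hgt ht
    exact mul_nonneg (sin_nonneg_of_nonneg_of_le_pi (by linarith [ht.2])
      (by linarith [ht.1, le_of_abs_le hab])) hgt
  · rw [integral_symm, ← intervalIntegral.integral_neg]
    simp only [← neg_mul, ← sin_neg, neg_sub]
    refine integral_nonneg_of_ae_restrict hle ?_
    filter_upwards [ae_restrict_of_ae hg, ae_restrict_mem measurableSet_Icc] with t hgt ht
    exact mul_nonneg (sin_nonneg_of_nonneg_of_le_pi (by linarith [ht.1])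
      (by linarith [ht.2, neg_le_of_abs_le hab])) hgt

noncomputable def supportPoint (h : ℝ → ℝ) (θ : ℝ) : E² :=
  h θ • u θ + deriv h θ • u (θ + π / 2)

lemma inner_supportPoint (h : ℝ → ℝ) (θ₀ θ : ℝ) :
    inner ℝ (supportPoint h θ₀) (u θ) = h θ₀ * cos (θ - θ₀) + deriv h θ₀ * sin (θ - θ₀) := by
  rw [supportPoint, inner_add_left, real_inner_smul_left, real_inner_smul_left, inner_u_u,
    inner_u_u, sub_add_eq_sub_sub, cos_sub_pi_div_two]

lemma inner_supportPoint_self (h : ℝ → ℝ) (θ : ℝ) : inner ℝ (supportPoint h θ) (u θ) = h θ := by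
  simp [inner_supportPoint]

theorem supportPoint_mem_wulffShape {h : ℝ → ℝ} (hper : Function.Periodic h (2 * π))
    (hC1 : ContDiff ℝ 1 h) (hac : ∀ a b, AbsolutelyContinuousOnInterval (deriv h) a b)
    (hconvex : ∀ᵐ θ : ℝ, 0 ≤ deriv (deriv h) θ + h θ) (θ₀ : ℝ) :
    supportPoint h θ₀ ∈ wulffShape h := by
  let g := fun θ => h θ - inner ℝ (supportPoint h θ₀) (u θ)
  have hg : Function.Periodic g (2 * π) :=
    hper.sub (u_periodic.comp (inner ℝ (supportPoint h θ₀)))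
  refine mem_wulffShape.2 fun θ => sub_nonneg.1 ?_
  obtain ⟨θ', ⟨hθ'₁, hθ'₂⟩, hgθ⟩ := hg.exists_mem_Ico two_pi_pos θ (θ₀ - π)
  change 0 ≤ g θ
  have hnonneg := integral_sin_sub_mul_nonneg hconvex (a := θ₀) (b := θ')
    (abs_le.2 ⟨by linarith, by linarith⟩)
  rw [integral_sin_sub_mul_deriv_deriv_add hC1 (hac θ₀ θ')] at hnonneg
  rw [hgθ]
  simpa only [g, inner_supportPoint] using hnonneg

theorem C11_function_is_support_function_of_constant_width_general (h : ℝ → ℝ)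
    (hper : Function.Periodic h (2 * π)) (hC1 : ContDiff ℝ 1 h)
    (hlip : ∃ L : NNReal, LipschitzWith L (deriv h))
    (hconvex : ∀ᵐ θ : ℝ, 0 ≤ deriv (deriv h) θ + h θ) :
    (⋂ θ : ℝ, {x : EuclideanSpace ℝ (Fin 2) | (inner ℝ x (u θ) : ℝ) ≤ h θ}).Nonempty ∧
    IsCompact (⋂ θ : ℝ, {x : EuclideanSpace ℝ (Fin 2) | (inner ℝ x (u θ) : ℝ) ≤ h θ}) ∧
    Convex ℝ (⋂ θ : ℝ, {x : EuclideanSpace ℝ (Fin 2) | (inner ℝ x (u θ) : ℝ) ≤ h θ}) ∧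
    IsSupportFn (⋂ θ : ℝ, {x : EuclideanSpace ℝ (Fin 2) | (inner ℝ x (u θ) : ℝ) ≤ h θ}) h := by
  obtain ⟨L, hlip⟩ := hlip
  have hmem (θ : ℝ) : supportPoint h θ ∈ wulffShape h :=
    supportPoint_mem_wulffShape hper hC1
      (fun _ _ => hlip.lipschitzOnWith.absolutelyContinuousOnInterval) hconvex θ
  exact ⟨⟨_, hmem 0⟩, isCompact_wulffShape h, convex_wulffShape h,
    isSupportFn_wulffShape fun θ => ⟨_, hmem θ, inner_supportPoint_self h θ⟩⟩

/-- If `h ∈ C^{1,1}(S¹)` satisfies `h(θ+π)+h(θ)=1` for all `θ` and `h''+h ≥ 0` a.e.,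
then `K = ⋂_θ {x : x · u(θ) ≤ h(θ)}` is a nonempty compact convex set of constant
width 1 with support function `h`. -/
theorem C11_function_is_support_function_of_constant_width (h : ℝ → ℝ)
    (hper : Function.Periodic h (2 * π)) (hC1 : ContDiff ℝ 1 h)
    (hlip : ∃ L : NNReal, LipschitzWith L (deriv h))
    (hwidth : ∀ θ : ℝ, h (θ + π) + h θ = 1)
    (hconvex : ∀ᵐ θ : ℝ, 0 ≤ deriv (deriv h) θ + h θ) :
    (⋂ θ : ℝ, {x : EuclideanSpace ℝ (Fin 2) | (inner ℝ x (u θ) : ℝ) ≤ h θ}).Nonempty ∧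
    IsCompact (⋂ θ : ℝ, {x : EuclideanSpace ℝ (Fin 2) | (inner ℝ x (u θ) : ℝ) ≤ h θ}) ∧
    Convex ℝ (⋂ θ : ℝ, {x : EuclideanSpace ℝ (Fin 2) | (inner ℝ x (u θ) : ℝ) ≤ h θ}) ∧
    IsSupportFn (⋂ θ : ℝ, {x : EuclideanSpace ℝ (Fin 2) | (inner ℝ x (u θ) : ℝ) ≤ h θ}) h :=
  C11_function_is_support_function_of_constant_width_general h hper hC1 hlip hconvex
end
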